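/- Unlimited growth of Group A eventually leads to segregation: for any parameters N^A, N^B ≥ 2, γ_A, γ_B ∈ (1/2,1), δ > 0, there exists an integer K such that for all integers k ≥ K, with Group A size N^A + k the segregated state ω_lm is the unique potential maximizer over the four group-symmetric states: ρ*_{N^A+k}(ω_lm) > ρ*_{N^A+k}(ω') for every ω' ∈ {ω_ll, ω_ml, ω_mm}. -/

import Mathlib

/-- C(n, 2) = n(n−1)/2, extended to real arguments. -/
noncomputable def C2 (n : ℝ) : ℝ := n * (n - 1) / 2

/-- Potential at the integrated state ω_ll (everyone on m) when Group A has size M. -/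
noncomputable def potLL (M NB γA γB : ℝ) : ℝ := C2 M * γA + C2 NB * γB

/-- Potential at the segregated state ω_lm (Group A on m, Group B on ℓ) when
Group A has size M. -/
noncomputable def potLM (M NB γA γB δ : ℝ) : ℝ :=
  C2 M * γA + M * NB * δ + C2 NB * (1 - γB)

/-- Potential at the segregated state ω_ml (Group A on ℓ, Group B on m) when
Group A has size M. -/
noncomputable def potML (M NB γA γB δ : ℝ) : ℝ :=
  C2 M * (1 - γA) + M * NB * δ + C2 NB * γB

/-- Potential at the integrated state ω_mm (everyone on ℓ) when Group A has size M. -/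
noncomputable def potMM (M NB γA γB : ℝ) : ℝ := C2 M * (1 - γA) + C2 NB * (1 - γB)

/-!
As Group A grows, the advantage of ω_lm over ω_ll grows linearly in its size M (the
cross-group term M·N^B·δ), its advantage over ω_ml grows quadratically (C(M,2)·(2γ_A − 1)),
and its advantage over ω_mm, C(M,2)·(2γ_A − 1) + M·N^B·δ, is positive as soon as M > 1.
Each advantage is therefore eventually positive along M = N^A + k.
-/

open Filter

lemma C2_pos {n : ℝ} (hn : 1 < n) : 0 < C2 n := by
  unfold C2
  have : 0 < n - 1 := sub_pos.mpr hn
  positivity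

lemma tendsto_C2_atTop : Tendsto C2 atTop atTop := by
  have hpred : Tendsto (fun n : ℝ => n - 1) atTop atTop := tendsto_atTop_add_const_right _ (-1) tendsto_id
  exact (tendsto_id.atTop_mul_atTop₀ hpred).atTop_div_const two_pos

section Potentials

variable (M NB γA γB δ : ℝ)

lemma potLM_sub_potLL :
    potLM M NB γA γB δ - potLL M NB γA γB = M * (NB * δ) - C2 NB * (2 * γB - 1) := by
  unfold potLM potLL; ring

lemma potLM_sub_potML :
    potLM M NB γA γB δ - potML M NB γA γB δ = C2 M * (2 * γA - 1) - C2 NB * (2 * γB - 1) := by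
  unfold potLM potML; ring

lemma potLM_sub_potMM :
    potLM M NB γA γB δ - potMM M NB γA γB = C2 M * (2 * γA - 1) + M * NB * δ := by
  unfold potLM potMM; ring

end Potentials

section

variable {NB γA γB δ : ℝ}

lemma eventually_potLL_lt_potLM (hNB : 0 < NB) (hδ : 0 < δ) :
    ∀ᶠ M in atTop, potLL M NB γA γB < potLM M NB γA γB δ := by
  have h : Tendsto (fun M => M * (NB * δ) - C2 NB * (2 * γB - 1)) atTop atTop :=
    tendsto_atTop_add_const_right _ _ (tendsto_id.atTop_mul_const (mul_pos hNB hδ))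
  filter_upwards [h.eventually_gt_atTop 0] with M hM
  rwa [← sub_pos, potLM_sub_potLL]

lemma eventually_potML_lt_potLM (hγA : 1 / 2 < γA) :
    ∀ᶠ M in atTop, potML M NB γA γB δ < potLM M NB γA γB δ := by
  have h : Tendsto (fun M => C2 M * (2 * γA - 1) - C2 NB * (2 * γB - 1)) atTop atTop :=
    tendsto_atTop_add_const_right _ _ (tendsto_C2_atTop.atTop_mul_const (by linarith))
  filter_upwards [h.eventually_gt_atTop 0] with M hM
  rwa [← sub_pos, potLM_sub_potML]

lemma potMM_lt_potLM {M : ℝ} (hM : 1 < M) (hNB : 0 ≤ NB) (hδ : 0 ≤ δ) (hγA : 1 / 2 < γA) :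
    potMM M NB γA γB < potLM M NB γA γB δ := by
  rw [← sub_pos, potLM_sub_potMM]
  have hγ : 0 < 2 * γA - 1 := by linarith
  have hM0 : 0 ≤ M := by linarith
  exact add_pos_of_pos_of_nonneg (mul_pos (C2_pos hM) hγ) (by positivity)

end

theorem unlimited_growth_leads_to_segregation_general
    (NA NB : ℕ) (hNB : 2 ≤ NB)
    (γA γB δ : ℝ) (hγA : γA ∈ Set.Ioo (1/2 : ℝ) 1)
    (hδ : 0 < δ) :
    ∃ K : ℕ, ∀ k : ℕ, K ≤ k →
      potLM (NA + k : ℕ) NB γA γB δ > potLL (NA + k : ℕ) NB γA γB ∧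
      potLM (NA + k : ℕ) NB γA γB δ > potML (NA + k : ℕ) NB γA γB δ ∧
      potLM (NA + k : ℕ) NB γA γB δ > potMM (NA + k : ℕ) NB γA γB := by
  have hNB' : (0 : ℝ) < NB := by positivity
  have hall : ∀ᶠ M in atTop, potLL M NB γA γB < potLM M NB γA γB δ ∧
      potML M NB γA γB δ < potLM M NB γA γB δ ∧ potMM M NB γA γB < potLM M NB γA γB δ :=
    (eventually_potLL_lt_potLM hNB' hδ).and <| (eventually_potML_lt_potLM hγA.1).and <|
      (eventually_gt_atTop 1).mono fun _ hM => potMM_lt_potLM hM hNB'.le hδ.le hγA.1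
  have hsize : Tendsto (fun k : ℕ => ((NA + k : ℕ) : ℝ)) atTop atTop :=
    tendsto_natCast_atTop_atTop.comp (tendsto_atTop_mono (Nat.le_add_left · NA) tendsto_id)
  exact eventually_atTop.mp (hsize.eventually hall)

/-- Unlimited growth of Group A eventually leads to segregation: there exists K
such that for all k ≥ K, with Group A size N^A + k, the segregated state ω_lm
is the unique potential maximizer over the four group-symmetric states. -/
theorem unlimited_growth_leads_to_segregation
    (NA NB : ℕ) (hNA : 2 ≤ NA) (hNB : 2 ≤ NB)
    (γA γB δ : ℝ) (hγA : γA ∈ Set.Ioo (1/2 : ℝ) 1) (hγB : γB ∈ Set.Ioo (1/2 : ℝ) 1)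
    (hδ : 0 < δ) :
    ∃ K : ℕ, ∀ k : ℕ, K ≤ k →
      potLM (NA + k : ℕ) NB γA γB δ > potLL (NA + k : ℕ) NB γA γB ∧
      potLM (NA + k : ℕ) NB γA γB δ > potML (NA + k : ℕ) NB γA γB δ ∧
      potLM (NA + k : ℕ) NB γA γB δ > potMM (NA + k : ℕ) NB γA γB :=
  unlimited_growth_leads_to_segregation_general NA NB hNB γA γB δ hγA hδ
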